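/- Let A, B, C, D ∈ ℚ[t] have degrees s_a, s_b, s_c, s_d with s_d = s_b + 1, s_b > s_c, s_b ≥ s_a, and suppose d·(leading coeff of D) ≠ (leading coeff of B) for all integers d with 0 < d < 2(s_b − s_c). If x ∈ ℚ((t⁻¹)) solves D x' = A + B x + C x² and deg x ≥ 1, then deg x = s_b − s_c and the leading coefficient of x equals ((s_b − s_c)·(leading coeff of D) − (leading coeff of B)) / (leading coeff of C). -/

import Mathlib

open Polynomial

/-- The formal derivative (with respect to `X`) of a formal Laurent series. -/
noncomputable def lsDeriv {F : Type*} [Field F] (f : LaurentSeries F) : LaurentSeries F where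
  coeff n := (n + 1 : ℤ) * f.coeff (n + 1)
  isPWO_support' := by
    refine ((HahnSeries.single (-1 : ℤ) (1 : F) * f).isPWO_support).mono ?_
    intro n hn
    have hf : f.coeff (n + 1) ≠ 0 := by
      intro h
      apply hn
      simp [h]
    have hcoeff : (HahnSeries.single (-1 : ℤ) (1 : F) * f).coeff n = f.coeff (n + 1) := by
      have := HahnSeries.coeff_single_mul_add (r := (1 : F)) (x := f) (b := (-1 : ℤ)) (a := n + 1)
      simpa using this
    simp only [HahnSeries.mem_support, hcoeff]
    exact hf

/-- `t`, as an element of `ℚ((t⁻¹))`: the field of Laurent series in `X = t⁻¹`,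
so `t = X⁻¹` is the Hahn series with a single coefficient `1` in degree `-1`. -/
noncomputable def lsT : LaurentSeries ℚ := HahnSeries.single (-1 : ℤ) 1

/-- The formal derivative with respect to `t` on `ℚ((t⁻¹))`: since `X = t⁻¹`,
`d/dt = -X² · d/dX`. -/
noncomputable def tDeriv (f : LaurentSeries ℚ) : LaurentSeries ℚ :=
  -(HahnSeries.single (2 : ℤ) (1 : ℚ)) * lsDeriv f

/-! With `e = deg x ≥ 1` and `c` the leading coefficient of `x`, the terms `D x'`, `B x`, `C x²`
have degrees `s_b + e`, `s_b + e`, `s_c + 2e` and leading coefficients `e·lc D·c`, `lc B·c`,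
`lc C·c²`, while `deg A ≤ s_b` stays below them. If `e > s_b - s_c`, the term `C x²` would be
alone in top degree. If `e < s_b - s_c`, the top coefficients of `D x'` and `B x` must cancel,
i.e. `e·lc D = lc B`, which `hlead` excludes. So `e = s_b - s_c`, and the top coefficient identity
`e·lc D·c = lc B·c + lc C·c²` determines `c`. -/

namespace HahnSeries

variable {Γ R : Type*} [AddCommMonoid Γ] [LinearOrder Γ] [IsOrderedCancelAddMonoid Γ]
  [NonUnitalNonAssocSemiring R]

theorem coeff_mul_add_of_le_orderTop {f g : R⟦Γ⟧} {a b : Γ} (hf : ↑a ≤ f.orderTop)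
    (hg : ↑b ≤ g.orderTop) : (f * g).coeff (a + b) = f.coeff a * g.coeff b := by
  rw [coeff_mul, Finset.sum_eq_single (a, b)]
  · rintro ⟨i, j⟩ hij hne
    have hsum : i + j = a + b := (Finset.mem_antidiagonal.mp hij).2.2
    rcases lt_or_ge i a with hi | hi
    · rw [coeff_eq_zero_of_lt_orderTop (lt_of_lt_of_le (WithTop.coe_lt_coe.2 hi) hf), zero_mul]
    · have hj : j < b := by
        by_contra! hj
        obtain rfl | hlt := hi.eq_or_lt
        · exact hne (by rw [add_left_cancel hsum])
        · exact (add_lt_add_of_lt_of_le hlt hj).ne' hsum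
      rw [coeff_eq_zero_of_lt_orderTop (lt_of_lt_of_le (WithTop.coe_lt_coe.2 hj) hg), mul_zero]
  · intro hab
    by_cases ha : f.coeff a = 0
    · rw [ha, zero_mul]
    · have hb : g.coeff b = 0 := by
        by_contra hb
        exact hab (Finset.mem_antidiagonal.mpr ⟨ha, hb, rfl⟩)
      rw [hb, mul_zero]

theorem coeff_mul_of_le_orderTop {f g : R⟦Γ⟧} {a b n : Γ} (hf : ↑a ≤ f.orderTop)
    (hg : ↑b ≤ g.orderTop) (hn : n ≤ a + b) :
    (f * g).coeff n = if n = a + b then f.coeff a * g.coeff b else 0 := by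
  split_ifs with h
  · rw [h, coeff_mul_add_of_le_orderTop hf hg]
  · refine coeff_eq_zero_of_lt_orderTop (lt_of_lt_of_le ?_ orderTop_add_le_mul)
    exact lt_of_lt_of_le (WithTop.coe_lt_coe.2 (lt_of_le_of_ne hn h)) (add_le_add hf hg)

end HahnSeries

theorem coeff_aeval_lsT (P : ℚ[X]) (n : ℤ) :
    (aeval lsT P).coeff n = if n ≤ 0 then P.coeff (-n).toNat else 0 := by
  induction P using Polynomial.induction_on' with
  | add p q hp hq =>
    rw [map_add, HahnSeries.coeff_add, hp, hq, Polynomial.coeff_add]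
    split_ifs <;> simp
  | monomial i r =>
    rw [aeval_monomial, LaurentSeries.algebraMap_apply, HahnSeries.C_apply, lsT,
      HahnSeries.single_pow, HahnSeries.single_mul_single, zero_add, one_pow, mul_one,
      HahnSeries.coeff_single, Polynomial.coeff_monomial]
    simp only [nsmul_eq_mul, mul_neg, mul_one]
    split_ifs <;> first | rfl | omega

theorem le_orderTop_aeval_lsT (P : ℚ[X]) :
    ((-P.natDegree : ℤ) : WithTop ℤ) ≤ (aeval lsT P).orderTop :=
  HahnSeries.le_orderTop_iff_forall.2 fun n hn => by
    have hn : n < -P.natDegree := WithTop.coe_lt_coe.1 hn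
    rw [coeff_aeval_lsT, if_pos (by omega)]
    exact coeff_eq_zero_of_natDegree_lt (by omega)

theorem coeff_aeval_lsT_neg_natDegree (P : ℚ[X]) :
    (aeval lsT P).coeff (-P.natDegree) = P.leadingCoeff := by
  rw [coeff_aeval_lsT, if_pos (by omega), neg_neg, Int.toNat_natCast, leadingCoeff]

theorem coeff_tDeriv (f : LaurentSeries ℚ) (n : ℤ) :
    (tDeriv f).coeff n = (1 - n) * f.coeff (n - 1) := by
  rw [tDeriv, neg_mul, HahnSeries.coeff_neg, HahnSeries.coeff_single_mul, one_mul]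
  change -(((n - 2 + 1 : ℤ) : ℚ) * f.coeff (n - 2 + 1)) = _
  rw [show n - 2 + 1 = n - 1 by ring]
  push_cast
  ring

theorem le_orderTop_tDeriv {f : LaurentSeries ℚ} {a : ℤ} (h : ↑a ≤ f.orderTop) :
    ↑(a + 1) ≤ (tDeriv f).orderTop :=
  HahnSeries.le_orderTop_iff_forall.2 fun n hn => by
    have hn : n - 1 < a := by have := WithTop.coe_lt_coe.1 hn; omega
    rw [coeff_tDeriv, HahnSeries.coeff_eq_zero_of_lt_orderTop
      (lt_of_lt_of_le (WithTop.coe_lt_coe.2 hn) h), mul_zero]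

/-- The coefficient of `t^(-n)` in the equation, for `x` of degree at most `-a` and `n` at or below
the exponents `a - s_b` of `D x'`, `B x` and `2a - s_c` of `C x²`. -/
theorem riccati_coeff_balance {A B C D : ℚ[X]} {x : LaurentSeries ℚ}
    (hx : aeval lsT D * tDeriv x = aeval lsT A + aeval lsT B * x + aeval lsT C * x ^ 2)
    (hdb : D.natDegree = B.natDegree + 1) (hba : A.natDegree ≤ B.natDegree)
    {a n : ℤ} (ha : a < 0) (hxa : ↑a ≤ x.orderTop)
    (hnB : n ≤ a - B.natDegree) (hnC : n ≤ 2 * a - C.natDegree) :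
    (if n = a - B.natDegree then (-a * D.leadingCoeff - B.leadingCoeff) * x.coeff a else 0) =
      if n = 2 * a - C.natDegree then C.leadingCoeff * x.coeff a ^ 2 else 0 := by
  have hsq : ↑(a + a) ≤ (x ^ 2).orderTop :=
    (pow_two x).symm ▸ HahnSeries.orderTop_add_le_mul.trans' (add_le_add hxa hxa)
  have hA : (aeval lsT A).coeff n = 0 :=
    HahnSeries.coeff_eq_zero_of_lt_orderTop
      (lt_of_lt_of_le (WithTop.coe_lt_coe.2 (by omega)) (le_orderTop_aeval_lsT A))
  have hcoeff := congrArg (HahnSeries.coeff · n) hx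
  simp only [HahnSeries.coeff_add, hA, zero_add] at hcoeff
  rw [HahnSeries.coeff_mul_of_le_orderTop (le_orderTop_aeval_lsT D) (le_orderTop_tDeriv hxa)
      (by omega),
    HahnSeries.coeff_mul_of_le_orderTop (le_orderTop_aeval_lsT B) hxa (by omega),
    HahnSeries.coeff_mul_of_le_orderTop (le_orderTop_aeval_lsT C) hsq (by omega),
    pow_two, HahnSeries.coeff_mul_add_of_le_orderTop hxa hxa, coeff_tDeriv,
    coeff_aeval_lsT_neg_natDegree, coeff_aeval_lsT_neg_natDegree, coeff_aeval_lsT_neg_natDegree,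
    show -(D.natDegree : ℤ) + (a + 1) = a - B.natDegree by omega,
    show -(B.natDegree : ℤ) + a = a - B.natDegree by omega,
    show -(C.natDegree : ℤ) + (a + a) = 2 * a - C.natDegree by omega,
    add_sub_cancel_right] at hcoeff
  push_cast at hcoeff
  split_ifs at hcoeff ⊢ <;> linear_combination hcoeff

theorem riccati_degree_leading_coeff_general (A B C D : Polynomial ℚ)
    (hC : C ≠ 0)
    (hdb : D.natDegree = B.natDegree + 1)
    (hbc : C.natDegree < B.natDegree)
    (hba : A.natDegree ≤ B.natDegree)
    (hlead : ∀ d : ℕ, 0 < d → d < 2 * (B.natDegree - C.natDegree) →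
      (d : ℚ) * D.leadingCoeff ≠ B.leadingCoeff)
    (x : LaurentSeries ℚ)
    (hx : aeval lsT D * tDeriv x = aeval lsT A + aeval lsT B * x + aeval lsT C * x ^ 2)
    (hdeg : x.order ≤ -1) :
    -x.order = (B.natDegree : ℤ) - C.natDegree ∧
      x.coeff x.order =
        (((B.natDegree : ℚ) - C.natDegree) * D.leadingCoeff - B.leadingCoeff)
          / C.leadingCoeff := by
  have hx0 : x ≠ 0 := by rintro rfl; simp at hdeg
  have hc : x.coeff x.order ≠ 0 := HahnSeries.coeff_order_eq_zero.not.2 hx0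
  have hCl : C.leadingCoeff ≠ 0 := leadingCoeff_ne_zero.2 hC
  have balance := fun n ↦ riccati_coeff_balance (a := x.order) (n := n) hx hdb hba (by omega)
    (HahnSeries.order_eq_orderTop_of_ne_zero hx0).le
  have horder : -x.order = (B.natDegree : ℤ) - C.natDegree := by
    refine le_antisymm (not_lt.1 fun h ↦ ?_) (not_lt.1 fun h ↦ ?_)
    · have key := balance (2 * x.order - C.natDegree) (by omega) le_rfl
      rw [if_neg (by omega), if_pos rfl] at key
      exact mul_ne_zero hCl (pow_ne_zero 2 hc) key.symm
    · have key := balance (x.order - B.natDegree) le_rfl (by omega)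
      rw [if_pos rfl, if_neg (by omega), mul_eq_zero, sub_eq_zero] at key
      refine hlead (-x.order).toNat (by omega) (by omega) ?_
      rw [← key.resolve_right hc, ← Int.cast_natCast, Int.toNat_of_nonneg (by omega),
        Int.cast_neg]
  refine ⟨horder, ?_⟩
  have key := balance (x.order - B.natDegree) le_rfl (by omega)
  rw [if_pos rfl, if_pos (by omega)] at key
  have he : ((B.natDegree : ℚ) - C.natDegree) = -x.order := by exact_mod_cast horder.symm
  rw [eq_div_iff hCl, he]
  exact mul_left_cancel₀ hc (by linear_combination -key)

/-- Let `A, B, C, D ∈ ℚ[t]` have degrees `s_a, s_b, s_c, s_d` with `s_d = s_b + 1`,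
`s_b > s_c`, `s_b ≥ s_a`, and suppose `d·(leading coeff of D) ≠ (leading coeff of B)` for
all integers `d` with `0 < d < 2(s_b − s_c)`. If `x ∈ ℚ((t⁻¹))` solves `D x' = A + B x + C x²`
and `deg x ≥ 1` (degree of a Laurent series being minus its order), then
`deg x = s_b − s_c` and the leading coefficient of `x` (the coefficient of `t^(deg x)`)
equals `((s_b − s_c)·leadingCoeff D − leadingCoeff B) / leadingCoeff C`. -/
theorem riccati_degree_leading_coeff (A B C D : Polynomial ℚ)
    (hB : B ≠ 0) (hC : C ≠ 0) (hD : D ≠ 0)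
    (hdb : D.natDegree = B.natDegree + 1)
    (hbc : C.natDegree < B.natDegree)
    (hba : A.natDegree ≤ B.natDegree)
    (hlead : ∀ d : ℕ, 0 < d → d < 2 * (B.natDegree - C.natDegree) →
      (d : ℚ) * D.leadingCoeff ≠ B.leadingCoeff)
    (x : LaurentSeries ℚ)
    (hx : aeval lsT D * tDeriv x = aeval lsT A + aeval lsT B * x + aeval lsT C * x ^ 2)
    (hdeg : x.order ≤ -1) :
    -x.order = (B.natDegree : ℤ) - C.natDegree ∧
      x.coeff x.order =
        (((B.natDegree : ℚ) - C.natDegree) * D.leadingCoeff - B.leadingCoeff)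
          / C.leadingCoeff :=
  riccati_degree_leading_coeff_general A B C D hC hdb hbc hba hlead x hx hdeg
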